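/- For every n > 3, the partial sum h_0 + h_1 + ... + h_n is negative. -/

import Mathlib

/-!
`t` is the Thue–Morse sequence, so on a block `4k+4, …, 4k+7` it takes the values `a, -a, -a, a`
with `a = t (k+1)`. As `a² = 1`, the recurrence collapses over such a block: with `x = h (4k+3)` and
`y = h (4k+2)` the block reads `a x + y, -a y, a x + 2 y, x + a y`. Hence if `|x| ≤ -y` and the
partial sum up to `4k+3` is `< y`, every partial sum in the block is negative and the same two
inequalities hold one block later. They hold for `k = 1`; the sums up to `4, …, 7` are computed.
-/

def t (n : ℕ) : ℤ := (-1) ^ ((Nat.digits 2 n).sum)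

def h : ℕ → ℤ
  | 0 => 0
  | 1 => 1
  | (n + 2) => t (n + 2) * h (n + 1) + h n

open Finset

lemma t_two_mul (n : ℕ) : t (2 * n) = t n := by
  rcases n.eq_zero_or_pos with rfl | hn
  · rfl
  · simp [t, Nat.digits_def' one_lt_two (by omega : 0 < 2 * n)]

lemma t_two_mul_add_one (n : ℕ) : t (2 * n + 1) = -t n := by
  have hdiv : (2 * n + 1) / 2 = n := by omega
  simp [t, pow_add, hdiv]

lemma t_eq_one_or_neg_one (n : ℕ) : t n = 1 ∨ t n = -1 :=
  neg_one_pow_eq_or ℤ _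

lemma h_block (k : ℕ) :
    h (4 * k + 4) = t (k + 1) * h (4 * k + 3) + h (4 * k + 2) ∧
    h (4 * k + 5) = -t (k + 1) * h (4 * k + 2) ∧
    h (4 * k + 6) = t (k + 1) * h (4 * k + 3) + 2 * h (4 * k + 2) ∧
    h (4 * k + 7) = h (4 * k + 3) + t (k + 1) * h (4 * k + 2) := by
  have t4 : t (4 * k + 4) = t (k + 1) := by
    rw [show 4 * k + 4 = 2 * (2 * (k + 1)) by ring, t_two_mul, t_two_mul]
  have t5 : t (4 * k + 5) = -t (k + 1) := by
    rw [show 4 * k + 5 = 2 * (2 * (k + 1)) + 1 by ring, t_two_mul_add_one, t_two_mul]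
  have t6 : t (4 * k + 6) = -t (k + 1) := by
    rw [show 4 * k + 6 = 2 * (2 * (k + 1) + 1) by ring, t_two_mul, t_two_mul_add_one]
  have t7 : t (4 * k + 7) = t (k + 1) := by
    rw [show 4 * k + 7 = 2 * (2 * (k + 1) + 1) + 1 by ring, t_two_mul_add_one,
      t_two_mul_add_one, neg_neg]
  have sq : t (k + 1) ^ 2 = 1 := by
    rcases t_eq_one_or_neg_one (k + 1) with e | e <;> simp [e]
  have e4 : h (4 * k + 4) = t (4 * k + 4) * h (4 * k + 3) + h (4 * k + 2) := rfl
  have e5 : h (4 * k + 5) = t (4 * k + 5) * h (4 * k + 4) + h (4 * k + 3) := rfl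
  have e6 : h (4 * k + 6) = t (4 * k + 6) * h (4 * k + 5) + h (4 * k + 4) := rfl
  have e7 : h (4 * k + 7) = t (4 * k + 7) * h (4 * k + 6) + h (4 * k + 5) := rfl
  simp only [t4, t5, t6, t7] at e4 e5 e6 e7
  have e5' : h (4 * k + 5) = -t (k + 1) * h (4 * k + 2) := by
    linear_combination e5 - t (k + 1) * e4 - h (4 * k + 3) * sq
  have e6' : h (4 * k + 6) = t (k + 1) * h (4 * k + 3) + 2 * h (4 * k + 2) := by
    linear_combination e6 - t (k + 1) * e5' + e4 + h (4 * k + 2) * sq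
  refine ⟨e4, e5', e6', ?_⟩
  linear_combination e7 + t (k + 1) * e6' + e5' + h (4 * k + 3) * sq

def BlockBound (k : ℕ) : Prop :=
  |h (4 * k + 3)| ≤ -h (4 * k + 2) ∧ ∑ i ∈ range (4 * k + 4), h i < h (4 * k + 2)

lemma BlockBound.sum_neg {k : ℕ} (hk : BlockBound k) : ∑ i ∈ range (4 * k + 4), h i < 0 := by
  obtain ⟨hx, hS⟩ := hk
  linarith [abs_nonneg (h (4 * k + 3))]

lemma BlockBound.succ {k : ℕ} (hk : BlockBound k) :
    ∑ i ∈ range (4 * k + 5), h i < 0 ∧ ∑ i ∈ range (4 * k + 6), h i < 0 ∧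
      ∑ i ∈ range (4 * k + 7), h i < 0 ∧ BlockBound (k + 1) := by
  obtain ⟨hx, hS⟩ := hk
  obtain ⟨e4, e5, e6, e7⟩ := h_block k
  have s5 : ∑ i ∈ range (4 * k + 5), h i = ∑ i ∈ range (4 * k + 4), h i + h (4 * k + 4) :=
    sum_range_succ h _
  have s6 : ∑ i ∈ range (4 * k + 6), h i = ∑ i ∈ range (4 * k + 5), h i + h (4 * k + 5) :=
    sum_range_succ h _
  have s7 : ∑ i ∈ range (4 * k + 7), h i = ∑ i ∈ range (4 * k + 6), h i + h (4 * k + 6) :=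
    sum_range_succ h _
  have s8 : ∑ i ∈ range (4 * (k + 1) + 4), h i = ∑ i ∈ range (4 * k + 7), h i + h (4 * k + 7) :=
    sum_range_succ h _
  rw [BlockBound, s8, show 4 * (k + 1) + 3 = 4 * k + 7 by ring,
    show 4 * (k + 1) + 2 = 4 * k + 6 by ring, abs_le]
  rw [abs_le] at hx
  rcases t_eq_one_or_neg_one (k + 1) with ha | ha <;> rw [ha] at e4 e5 e6 e7 <;>
    refine ⟨?_, ?_, ?_, ⟨?_, ?_⟩, ?_⟩ <;> linarith

lemma blockBound_of_pos {k : ℕ} (hk : 0 < k) : BlockBound k := by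
  induction k, hk using Nat.le_induction with
  | base => unfold BlockBound; decide
  | succ k _ ih => exact ih.succ.2.2.2

theorem stmt12 : ∀ n : ℕ, 3 < n → (∑ i ∈ Finset.range (n + 1), h i) < 0 := by
  intro n hn
  obtain ⟨k, j, hj, rfl⟩ : ∃ k j, j < 4 ∧ n = 4 * k + 4 + j :=
    ⟨(n - 4) / 4, (n - 4) % 4, Nat.mod_lt _ four_pos, by omega⟩
  rcases k.eq_zero_or_pos with rfl | hk
  · interval_cases j <;> decide
  · obtain ⟨s5, s6, s7, hnext⟩ := (blockBound_of_pos hk).succ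
    interval_cases j
    · exact s5
    · exact s6
    · exact s7
    · exact hnext.sum_neg
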